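/- Let G be a graph on n ≥ 3 vertices and for each vertex v of G let G_v denote the induced subgraph of G on the remaining n−1 vertices. If every G_v admits a fractional triangle decomposition, then G admits a fractional triangle decomposition. -/

import Mathlib

open Finset
open scoped Classical

variable {V : Type*}

/-- A triangle packing of `G`: a finite collection of triangles (3-cliques) of `G` that are
pairwise edge-disjoint (i.e. any two distinct members share at most one vertex). -/
def SimpleGraph.IsTrianglePacking [DecidableEq V] (G : SimpleGraph V)
    (P : Finset (Finset V)) : Prop :=
  (∀ T ∈ P, G.IsNClique 3 T) ∧
    (P : Set (Finset V)).Pairwise fun S T => (S ∩ T).card ≤ 1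

/-- The maximum size (number of edges, i.e. `3 * number of triangles`) of a triangle packing. -/
noncomputable def SimpleGraph.triangleNu [DecidableEq V] (G : SimpleGraph V) : ℕ :=
  sSup {m | ∃ P : Finset (Finset V), G.IsTrianglePacking P ∧ m = 3 * P.card}

/-- A fractional triangle packing of `G`: a weight function on triples of vertices, supported
on triangles of `G`, with values in `[0,1]`, such that every edge carries total weight ≤ 1. -/
def SimpleGraph.IsFracTrianglePacking [Fintype V] [DecidableEq V] (G : SimpleGraph V)
    (w : Finset V → ℝ) : Prop :=
  (∀ T, 0 ≤ w T ∧ w T ≤ 1) ∧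
  (∀ T, ¬ G.IsNClique 3 T → w T = 0) ∧
  ∀ u v : V, G.Adj u v →
    ∑ T ∈ univ.filter (fun T : Finset V => G.IsNClique 3 T ∧ u ∈ T ∧ v ∈ T), w T ≤ 1

/-- `ν*(G)`: the maximum size `3 ∑ w(T)` of a fractional triangle packing of `G`. -/
noncomputable def SimpleGraph.nuStar [Fintype V] [DecidableEq V] (G : SimpleGraph V) : ℝ :=
  sSup {x | ∃ w : Finset V → ℝ, G.IsFracTrianglePacking w ∧ x = 3 * ∑ T : Finset V, w T}

/-- `η(G) = ν*(G)/(n(n-1))` where `n = |V(G)|`. -/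
noncomputable def SimpleGraph.etaPack [Fintype V] [DecidableEq V] (G : SimpleGraph V) : ℝ :=
  G.nuStar / ((Fintype.card V : ℝ) * ((Fintype.card V : ℝ) - 1))

/-- A fractional triangle decomposition: a fractional packing with equality on every edge. -/
def SimpleGraph.IsFracTriangleDecomposition [Fintype V] [DecidableEq V] (G : SimpleGraph V)
    (w : Finset V → ℝ) : Prop :=
  G.IsFracTrianglePacking w ∧
  ∀ u v : V, G.Adj u v →
    ∑ T ∈ univ.filter (fun T : Finset V => G.IsNClique 3 T ∧ u ∈ T ∧ v ∈ T), w T = 1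

/-- `G` is `ε`-far from bipartite: every bipartite subgraph misses at least `ε n²` edges. -/
def FarFromBipartite [Fintype V] [DecidableEq V] (ε : ℝ) (G : SimpleGraph V) : Prop :=
  ∀ H : SimpleGraph V, H ≤ G → H.Colorable 2 →
    ε * (Fintype.card V : ℝ) ^ 2 ≤ (G.edgeFinset.card : ℝ) - (H.edgeFinset.card : ℝ)

/-- The disjoint union of two cliques on `⌈n/2⌉`-ish halves of `Fin n`
(the first `n/2` vertices form one clique, the rest form the other). -/
def twoCliques (n : ℕ) : SimpleGraph (Fin n) where
  Adj u v := u ≠ v ∧ ((u : ℕ) < n / 2 ↔ (v : ℕ) < n / 2)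
  symm := by constructor; intro u v h; exact ⟨h.1.symm, h.2.symm⟩
  loopless := by constructor; intro u h; exact h.1 rfl

/-- `g(n)`: minimum over co-triangle-free `n`-vertex graphs of the max triangle packing size. -/
noncomputable def gInt (n : ℕ) : ℕ :=
  sInf {m | ∃ G : SimpleGraph (Fin n), Gᶜ.CliqueFree 3 ∧ m = G.triangleNu}

/-- `g*(n)`: minimum over co-triangle-free `n`-vertex graphs of `ν*`. -/
noncomputable def gStar (n : ℕ) : ℝ :=
  sInf {x | ∃ G : SimpleGraph (Fin n), Gᶜ.CliqueFree 3 ∧ x = G.nuStar}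

/-!
Average the decompositions `w v` of the vertex-deleted graphs `G - v`:
`W T = (n - 2)⁻¹ ∑_{v ∉ T} w v T`. An edge `uu'` survives in `G - v` exactly for the
`n - 2` vertices `v ∉ {u, u'}`, and in each of them `w v` puts weight `1` on it, so `W` puts
weight `1` on every edge of `G`.
-/

namespace SimpleGraph

variable {V : Type*} [Fintype V] [DecidableEq V] (G : SimpleGraph V)

noncomputable def trianglesThrough (u v : V) : Finset (Finset V) :=
  univ.filter fun T => G.IsNClique 3 T ∧ u ∈ T ∧ v ∈ T

variable {G}

@[simp]
theorem mem_trianglesThrough {u v : V} {T : Finset V} :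
    T ∈ G.trianglesThrough u v ↔ G.IsNClique 3 T ∧ u ∈ T ∧ v ∈ T := by
  simp [trianglesThrough]

theorem isFracTriangleDecomposition_of_nonneg {w : Finset V → ℝ} (hw : ∀ T, 0 ≤ w T)
    (hsupp : ∀ T, ¬ G.IsNClique 3 T → w T = 0)
    (hsum : ∀ u v, G.Adj u v → ∑ T ∈ G.trianglesThrough u v, w T = 1) :
    G.IsFracTriangleDecomposition w := by
  have hle : ∀ T, w T ≤ 1 := by
    intro T
    by_cases hT : G.IsNClique 3 T
    · obtain ⟨a, b, c, hab, -, -, rfl⟩ := card_eq_three.mp hT.card_eq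
      have hadj : G.Adj a b := hT.isClique (by simp) (by simp) hab
      calc w {a, b, c} ≤ ∑ T ∈ G.trianglesThrough a b, w T :=
            single_le_sum (fun T _ => hw T) (by simp [hT])
        _ = 1 := hsum a b hadj
    · exact (hsupp T hT).le.trans zero_le_one
  exact ⟨⟨fun T => ⟨hw T, hle T⟩, hsupp, fun u v huv => (hsum u v huv).le⟩, hsum⟩

theorem sum_trianglesThrough_induce {s : Set V} [Fintype s] [DecidablePred (· ∈ s)]
    (f : Finset s → ℝ) (u v : s) :
    ∑ T ∈ (G.induce s).trianglesThrough u v, f T =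
      ∑ T ∈ (G.trianglesThrough u v).filter (fun T => ↑T ⊆ s), f (T.subtype (· ∈ s)) := by
  have subtype_map_eq (T : Finset s) : (T.map (.subtype _)).subtype (· ∈ s) = T :=
    Finset.map_injective (.subtype _) <|
      subtype_map_of_mem fun _ => property_of_mem_map_subtype T
  refine sum_nbij' (fun T => T.map (.subtype _)) (fun T => T.subtype (· ∈ s)) ?_ ?_
    (fun T _ => subtype_map_eq T) ?_ (fun T _ => by rw [subtype_map_eq])
  · intro T hT
    simp only [mem_filter, mem_trianglesThrough, isNClique_induce_iff] at hT ⊢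
    exact ⟨⟨hT.1, mem_map_of_mem _ hT.2.1, mem_map_of_mem _ hT.2.2⟩, map_subtype_subset T⟩
  · intro T hT
    simp only [mem_filter, mem_trianglesThrough, isNClique_induce_iff] at hT ⊢
    rw [subtype_map_of_mem hT.2]
    simpa [mem_subtype] using hT.1
  · intro T hT
    rw [mem_filter] at hT
    exact subtype_map_of_mem hT.2

theorem sum_trianglesThrough_filter_notMem {v u u' : V}
    {w : Finset ({v}ᶜ : Set V) → ℝ} (hw : (G.induce {v}ᶜ).IsFracTriangleDecomposition w)
    (huu' : G.Adj u u') (hu : u ∈ ({v}ᶜ : Set V)) (hu' : u' ∈ ({v}ᶜ : Set V)) :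
    ∑ T ∈ (G.trianglesThrough u u').filter (v ∉ ·), w (T.subtype (· ∈ ({v}ᶜ : Set V))) = 1 :=
  calc ∑ T ∈ (G.trianglesThrough u u').filter (v ∉ ·), w (T.subtype (· ∈ ({v}ᶜ : Set V)))
      = ∑ T ∈ (G.trianglesThrough u u').filter (fun T => ↑T ⊆ ({v}ᶜ : Set V)),
          w (T.subtype (· ∈ ({v}ᶜ : Set V))) :=
        sum_congr (filter_congr fun T _ => by simp) fun _ _ => rfl
    _ = ∑ T ∈ (G.induce {v}ᶜ).trianglesThrough ⟨u, hu⟩ ⟨u', hu'⟩, w T :=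
      (sum_trianglesThrough_induce w ⟨u, hu⟩ ⟨u', hu'⟩).symm
    _ = 1 := hw.2 _ _ huu'

noncomputable def deletionAverage (w : ∀ v : V, Finset ({v}ᶜ : Set V) → ℝ) (T : Finset V) :
    ℝ :=
  ((Fintype.card V : ℝ) - 2)⁻¹ * ∑ v ∈ Tᶜ, w v (T.subtype (· ∈ ({v}ᶜ : Set V)))

variable {w : ∀ v : V, Finset ({v}ᶜ : Set V) → ℝ}

theorem deletionAverage_nonneg (hn : 2 ≤ Fintype.card V) (hw : ∀ v T, 0 ≤ w v T)
    (T : Finset V) : 0 ≤ deletionAverage w T := by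
  have : (0 : ℝ) ≤ (Fintype.card V : ℝ) - 2 := by
    rw [sub_nonneg]; exact_mod_cast hn
  exact mul_nonneg (inv_nonneg.mpr this) (sum_nonneg fun v _ => hw v _)

theorem deletionAverage_eq_zero_of_not_isNClique
    (hw : ∀ v T, ¬ (G.induce {v}ᶜ).IsNClique 3 T → w v T = 0) {T : Finset V}
    (hT : ¬ G.IsNClique 3 T) : deletionAverage w T = 0 := by
  refine mul_eq_zero_of_right _ (sum_eq_zero fun v hv => hw v _ ?_)
  rw [isNClique_induce_iff, subtype_map_of_mem fun x hx => ?_]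
  · exact hT
  · rintro rfl; exact mem_compl.mp hv hx

theorem sum_trianglesThrough_deletionAverage (hn : Fintype.card V ≠ 2)
    (hw : ∀ v, (G.induce {v}ᶜ).IsFracTriangleDecomposition (w v)) {u u' : V}
    (huu' : G.Adj u u') : ∑ T ∈ G.trianglesThrough u u', deletionAverage w T = 1 := by
  have hcard : ((({u, u'} : Finset V)ᶜ).card : ℝ) = (Fintype.card V : ℝ) - 2 := by
    rw [card_compl, Nat.cast_sub (card_le_univ _), card_pair huu'.ne]; rfl
  -- a triangle through `u u'` can only avoid a vertex `v ∉ {u, u'}`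
  have hswap : ∀ T v, T ∈ G.trianglesThrough u u' ∧ v ∈ Tᶜ ↔
      T ∈ (G.trianglesThrough u u').filter (v ∉ ·) ∧ v ∈ ({u, u'} : Finset V)ᶜ := by
    intro T v
    simp only [mem_filter, mem_compl, mem_trianglesThrough, mem_insert, mem_singleton]
    constructor
    · rintro ⟨⟨hT, huT, hu'T⟩, hvT⟩
      exact ⟨⟨⟨hT, huT, hu'T⟩, hvT⟩, by rintro (rfl | rfl) <;> contradiction⟩
    · rintro ⟨h, -⟩; exact h
  calc ∑ T ∈ G.trianglesThrough u u', deletionAverage w T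
      = ((Fintype.card V : ℝ) - 2)⁻¹ * ∑ v ∈ ({u, u'} : Finset V)ᶜ,
          ∑ T ∈ (G.trianglesThrough u u').filter (v ∉ ·),
            w v (T.subtype (· ∈ ({v}ᶜ : Set V))) := by
        simp only [deletionAverage, ← mul_sum]
        rw [sum_comm' hswap]
    _ = ((Fintype.card V : ℝ) - 2)⁻¹ * ∑ v ∈ ({u, u'} : Finset V)ᶜ, 1 := by
        congr 1
        refine sum_congr rfl fun v hv => ?_
        simp only [mem_compl, mem_insert, mem_singleton, not_or] at hv
        exact sum_trianglesThrough_filter_notMem (hw v) huu' (Ne.symm hv.1) (Ne.symm hv.2)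
    _ = 1 := by
        rw [sum_const, nsmul_one, hcard]
        refine inv_mul_cancel₀ (sub_ne_zero.mpr ?_)
        exact_mod_cast hn

end SimpleGraph

/-- if every one-vertex-deleted induced subgraph of `G` has a fractional
triangle decomposition, then so does `G`. -/
theorem stmt7 {V : Type*} [Fintype V] [DecidableEq V] (G : SimpleGraph V)
    (hn : 3 ≤ Fintype.card V)
    (h : ∀ v : V, ∃ w, (G.induce ({v}ᶜ : Set V)).IsFracTriangleDecomposition w) :
    ∃ w, G.IsFracTriangleDecomposition w := by
  choose w hw using h
  exact ⟨SimpleGraph.deletionAverage w, SimpleGraph.isFracTriangleDecomposition_of_nonneg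
    (SimpleGraph.deletionAverage_nonneg (by omega) fun v T => ((hw v).1.1 T).1)
    (fun _ => SimpleGraph.deletionAverage_eq_zero_of_not_isNClique fun v => (hw v).1.2.1)
    fun _ _ => SimpleGraph.sum_trianglesThrough_deletionAverage (by omega) hw⟩
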